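/- arXiv:2408.15611 — 2 statements merged into one kernel-verified Lean document; each statement's English description precedes it below -/
import Mathlib

section
/- Let A_1, ..., A_t be complex sequences of length v. Then Σ_{i=1}^t PAF(A_i, s) = α for all s = 1,...,v-1 and Σ_{i=1}^t PAF(A_i, 0) = α_0 if and only if Σ_{i=1}^t PSD(A_i, s) = β for all s = 1,...,v-1 and Σ_{i=1}^t PSD(A_i, 0) = β_0, where β_0 = α_0 + (v-1)α and β = α_0 - α. -/
open Finset Complex

/-- Periodic autocorrelation function of a complex sequence of length `v`. -/
noncomputable def PAFc (v : ℕ) (A : ℕ → ℂ) (s : ℕ) : ℂ :=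
  ∑ k ∈ range v, A k * starRingEnd ℂ (A ((k + s) % v))

/-- Discrete Fourier transform of a complex sequence of length `v`. -/
noncomputable def DFT (v : ℕ) (A : ℕ → ℂ) (s : ℕ) : ℂ :=
  ∑ k ∈ range v, A k * Complex.exp (2 * Real.pi * Complex.I * k * s / v)

/-- Power spectral density. -/
noncomputable def PSD (v : ℕ) (A : ℕ → ℂ) (s : ℕ) : ℝ :=
  Complex.normSq (DFT v A s)

noncomputable def primRoot (v : ℕ) : ℂ := Complex.exp (2 * Real.pi * Complex.I / v)

lemma primRoot_pow_v (v : ℕ) (hv : 0 < v) : (primRoot v) ^ v = 1 :=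
  (Complex.isPrimitiveRoot_exp v hv.ne').pow_eq_one

lemma primRoot_pow_pow_v (v : ℕ) (hv : 0 < v) (m : ℕ) : (primRoot v ^ m) ^ v = 1 := by
  rw [← pow_mul, mul_comm, pow_mul, primRoot_pow_v v hv, one_pow]

lemma conj_primRoot_pow_pow_v (v : ℕ) (hv : 0 < v) (m : ℕ) :
    (starRingEnd ℂ (primRoot v ^ m)) ^ v = 1 := by
  rw [← map_pow, primRoot_pow_pow_v v hv, map_one]

lemma primRoot_mul_conj (v : ℕ) (hv : 0 < v) (m : ℕ) :
    primRoot v ^ m * starRingEnd ℂ (primRoot v ^ m) = 1 := by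
  rw [Complex.mul_conj]
  have h : Complex.normSq (primRoot v ^ m) = 1 := by
    have hn : ‖primRoot v ^ m‖ = 1 :=
      Complex.norm_eq_one_of_pow_eq_one (primRoot_pow_pow_v v hv m) hv.ne'
    rw [Complex.normSq_eq_norm_sq, hn, one_pow]
  rw [h]; norm_num

lemma conj_primRoot_eq_inv (v : ℕ) (hv : 0 < v) (m : ℕ) :
    starRingEnd ℂ (primRoot v ^ m) = (primRoot v ^ m)⁻¹ := by
  have hn : ‖primRoot v ^ m‖ = 1 :=
    Complex.norm_eq_one_of_pow_eq_one (primRoot_pow_pow_v v hv m) hv.ne'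
  exact (Complex.inv_eq_conj hn).symm

lemma dft_eq (v : ℕ) (A : ℕ → ℂ) (s : ℕ) :
    DFT v A s = ∑ k ∈ range v, A k * (primRoot v ^ s) ^ k := by
  refine Finset.sum_congr rfl fun k _ => ?_
  congr 1
  rw [← pow_mul]
  simp only [primRoot]
  rw [← Complex.exp_nat_mul]
  congr 1
  push_cast
  ring

lemma mod_helper (v k a : ℕ) (hv : 0 < v) (ha : a < v) :
    (k + a + (v - k % v)) % v = a := by
  have h2 : k + a + (v - k % v) = a + (v * (k / v) + v) := by
    have h3 := Nat.div_add_mod k v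
    have h4 : k % v < v := Nat.mod_lt _ hv
    omega
  have h5 : v * (k / v) + v = v * (k / v + 1) := by ring
  rw [h2, h5, Nat.add_mul_mod_self_left, Nat.mod_eq_of_lt ha]

lemma sum_shift (v k : ℕ) (hv : 0 < v) (f : ℕ → ℂ) :
    ∑ l ∈ range v, f l = ∑ r ∈ range v, f ((k + r) % v) := by
  refine Finset.sum_nbij' (i := fun l => (l + (v - k % v)) % v)
    (j := fun r => (k + r) % v) ?_ ?_ ?_ ?_ ?_
  · intro a _; exact mem_range.mpr (Nat.mod_lt _ hv)
  · intro a _; exact mem_range.mpr (Nat.mod_lt _ hv)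
  · intro a ha
    simp only [mem_range] at ha
    show (k + (a + (v - k % v)) % v) % v = a
    rw [Nat.add_mod_mod, ← add_assoc]
    exact mod_helper v k a hv ha
  · intro a ha
    simp only [mem_range] at ha
    show ((k + a) % v + (v - k % v)) % v = a
    rw [Nat.mod_add_mod]
    exact mod_helper v k a hv ha
  · intro a ha
    simp only [mem_range] at ha
    rw [Nat.add_mod_mod, ← add_assoc, mod_helper v k a hv ha]

lemma psd_expand (v : ℕ) (hv : 0 < v) (A : ℕ → ℂ) (s : ℕ) :
    (PSD v A s : ℂ) = ∑ r ∈ range v, PAFc v A r * (starRingEnd ℂ (primRoot v ^ s)) ^ r := by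
  set ζ := primRoot v ^ s with hζ
  have hcv : (starRingEnd ℂ ζ) ^ v = 1 := conj_primRoot_pow_pow_v v hv s
  have hmul : ζ * starRingEnd ℂ ζ = 1 := primRoot_mul_conj v hv s
  calc (PSD v A s : ℂ) = DFT v A s * starRingEnd ℂ (DFT v A s) := by
        rw [PSD]; exact (Complex.mul_conj _).symm
    _ = ∑ k ∈ range v, ∑ l ∈ range v,
          (A k * ζ ^ k) * starRingEnd ℂ (A l * ζ ^ l) := by
        rw [dft_eq v A s, ← hζ, map_sum, Finset.sum_mul_sum]
    _ = ∑ k ∈ range v, ∑ r ∈ range v,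
          (A k * ζ ^ k) * starRingEnd ℂ (A ((k + r) % v) * ζ ^ ((k + r) % v)) := by
        refine Finset.sum_congr rfl fun k _ => ?_
        exact sum_shift v k hv _
    _ = ∑ r ∈ range v, ∑ k ∈ range v,
          (A k * starRingEnd ℂ (A ((k + r) % v))) * (starRingEnd ℂ ζ) ^ r := by
        rw [Finset.sum_comm]
        refine Finset.sum_congr rfl fun r _ => Finset.sum_congr rfl fun k _ => ?_
        rw [map_mul, map_pow, ← pow_eq_pow_mod (k + r) hcv, pow_add]
        have h1 : ζ ^ k * (starRingEnd ℂ ζ) ^ k = 1 := by rw [← mul_pow, hmul, one_pow]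
        linear_combination (A k * starRingEnd ℂ (A ((k + r) % v)) * (starRingEnd ℂ ζ) ^ r) * h1
    _ = ∑ r ∈ range v, PAFc v A r * (starRingEnd ℂ ζ) ^ r := by
        refine Finset.sum_congr rfl fun r _ => ?_
        rw [PAFc, Finset.sum_mul]

lemma sum_pow_eq (v : ℕ) (x : ℂ) (hx : x ^ v = 1) :
    ∑ r ∈ range v, x ^ r = if x = 1 then (v : ℂ) else 0 := by
  split_ifs with h
  · subst h; simp
  · rw [geom_sum_eq h, hx, sub_self, zero_div]

lemma inv_dft (v : ℕ) (hv : 0 < v) (A : ℕ → ℂ) (r : ℕ) (hr : r < v) :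
    ∑ s ∈ range v, (PSD v A s : ℂ) * (primRoot v ^ r) ^ s = (v : ℂ) * PAFc v A r := by
  have hprim := Complex.isPrimitiveRoot_exp v hv.ne'
  calc ∑ s ∈ range v, (PSD v A s : ℂ) * (primRoot v ^ r) ^ s
      = ∑ s ∈ range v, ∑ q ∈ range v,
          PAFc v A q * (starRingEnd ℂ (primRoot v ^ q) * primRoot v ^ r) ^ s := by
        refine Finset.sum_congr rfl fun s _ => ?_
        rw [psd_expand v hv A s, Finset.sum_mul]
        refine Finset.sum_congr rfl fun q _ => ?_
        rw [mul_pow, mul_assoc]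
        congr 1
        rw [map_pow, ← pow_mul, mul_comm s q, pow_mul, ← map_pow]
    _ = ∑ q ∈ range v, PAFc v A q *
          ∑ s ∈ range v, (starRingEnd ℂ (primRoot v ^ q) * primRoot v ^ r) ^ s := by
        rw [Finset.sum_comm]
        refine Finset.sum_congr rfl fun q _ => ?_
        rw [Finset.mul_sum]
    _ = (v : ℂ) * PAFc v A r := by
        rw [Finset.sum_eq_single r]
        · have h1 : starRingEnd ℂ (primRoot v ^ r) * primRoot v ^ r = 1 := by
            rw [mul_comm]; exact primRoot_mul_conj v hv r
          rw [h1]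
          simp [mul_comm]
        · intro q hq hqr
          simp only [mem_range] at hq
          have hx : (starRingEnd ℂ (primRoot v ^ q) * primRoot v ^ r) ^ v = 1 := by
            rw [mul_pow, conj_primRoot_pow_pow_v v hv q, primRoot_pow_pow_v v hv r, one_mul]
          have hne : starRingEnd ℂ (primRoot v ^ q) * primRoot v ^ r ≠ 1 := by
            rw [conj_primRoot_eq_inv v hv q]
            intro h
            have hq0 : primRoot v ^ q ≠ 0 := by
              intro h0
              have := primRoot_pow_pow_v v hv q
              rw [h0, zero_pow hv.ne'] at this
              exact zero_ne_one this
            have : primRoot v ^ r = primRoot v ^ q := by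
              field_simp at h
              linear_combination h
            exact hqr (hprim.pow_inj hq hr this.symm)
          rw [sum_pow_eq v _ hx, if_neg hne, mul_zero]
        · intro h; exact absurd (mem_range.mpr hr) h

/-- Theorem of Đoković–Kotsireas relating PAF constants and PSD constants:
the sequences are complementary with PAF constants `α₀, α` iff their PSD values
sum to the constants `β₀ = α₀ + (v-1)α` and `β = α₀ - α`. -/
theorem paf_iff_psd (v t : ℕ) (hv : 0 < v) (A : Fin t → ℕ → ℂ) (α₀ α : ℂ) :
    ((∀ s, 1 ≤ s → s < v → ∑ i, PAFc v (A i) s = α) ∧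
      (∑ i, PAFc v (A i) 0 = α₀))
    ↔
    ((∀ s, 1 ≤ s → s < v → (∑ i, (PSD v (A i) s : ℂ)) = α₀ - α) ∧
      ((∑ i, (PSD v (A i) 0 : ℂ)) = α₀ + ((v : ℂ) - 1) * α)) := by
  have hprim := Complex.isPrimitiveRoot_exp v hv.ne'
  have hvne : (v : ℂ) ≠ 0 := Nat.cast_ne_zero.mpr hv.ne'
  constructor
  · rintro ⟨h1, h2⟩
    have key : ∀ s : ℕ, ∑ i, (PSD v (A i) s : ℂ)
        = α * (∑ r ∈ range v, (starRingEnd ℂ (primRoot v ^ s)) ^ r) + (α₀ - α) := by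
      intro s
      calc ∑ i, (PSD v (A i) s : ℂ)
          = ∑ i, ∑ r ∈ range v, PAFc v (A i) r * (starRingEnd ℂ (primRoot v ^ s)) ^ r := by
              refine Finset.sum_congr rfl fun i _ => psd_expand v hv (A i) s
        _ = ∑ r ∈ range v, (∑ i, PAFc v (A i) r) * (starRingEnd ℂ (primRoot v ^ s)) ^ r := by
              rw [Finset.sum_comm]
              refine Finset.sum_congr rfl fun r _ => ?_
              rw [Finset.sum_mul]
        _ = ∑ r ∈ range v, (α * (starRingEnd ℂ (primRoot v ^ s)) ^ r
              + if r = 0 then α₀ - α else 0) := by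
              refine Finset.sum_congr rfl fun r hr => ?_
              simp only [mem_range] at hr
              rcases Nat.eq_zero_or_pos r with h | h
              · subst h
                rw [h2]
                simp
              · rw [h1 r h hr, if_neg h.ne', add_zero]
        _ = α * (∑ r ∈ range v, (starRingEnd ℂ (primRoot v ^ s)) ^ r) + (α₀ - α) := by
              rw [Finset.sum_add_distrib, Finset.mul_sum, Finset.sum_ite_eq' (range v) 0,
                if_pos (mem_range.mpr hv)]
    constructor
    · intro s hs1 hs2
      have hx : (starRingEnd ℂ (primRoot v ^ s)) ^ v = 1 := conj_primRoot_pow_pow_v v hv s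
      have hne : starRingEnd ℂ (primRoot v ^ s) ≠ 1 := by
        intro h
        have : primRoot v ^ s = 1 := by
          have := congrArg (starRingEnd ℂ) h
          simpa using this
        exact hprim.pow_ne_one_of_pos_of_lt (Nat.one_le_iff_ne_zero.mp hs1) hs2 this
      rw [key s, sum_pow_eq v _ hx, if_neg hne, mul_zero, zero_add]
    · have h0 : starRingEnd ℂ (primRoot v ^ 0) = 1 := by simp
      rw [key 0, h0]
      simp only [one_pow, Finset.sum_const, card_range, nsmul_eq_mul, mul_one]
      ring
  · rintro ⟨k1, k2⟩
    have key : ∀ r : ℕ, r < v → (v : ℂ) * (∑ i, PAFc v (A i) r)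
        = (α₀ - α) * (∑ s ∈ range v, (primRoot v ^ r) ^ s) + ((v : ℂ) - 1) * α + α := by
      intro r hr
      calc (v : ℂ) * (∑ i, PAFc v (A i) r)
          = ∑ i, ∑ s ∈ range v, (PSD v (A i) s : ℂ) * (primRoot v ^ r) ^ s := by
            rw [Finset.mul_sum]
            refine Finset.sum_congr rfl fun i _ => (inv_dft v hv (A i) r hr).symm
        _ = ∑ s ∈ range v, (∑ i, (PSD v (A i) s : ℂ)) * (primRoot v ^ r) ^ s := by
            rw [Finset.sum_comm]
            refine Finset.sum_congr rfl fun s _ => ?_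
            rw [Finset.sum_mul]
        _ = ∑ s ∈ range v, ((α₀ - α) * (primRoot v ^ r) ^ s
              + if s = 0 then ((v : ℂ) - 1) * α + α else 0) := by
            refine Finset.sum_congr rfl fun s hs => ?_
            simp only [mem_range] at hs
            rcases Nat.eq_zero_or_pos s with h | h
            · subst h
              rw [k2]
              simp
            · rw [k1 s h hs, if_neg h.ne', add_zero]
        _ = (α₀ - α) * (∑ s ∈ range v, (primRoot v ^ r) ^ s) + ((v : ℂ) - 1) * α + α := by
            rw [Finset.sum_add_distrib, Finset.mul_sum, Finset.sum_ite_eq' (range v) 0,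
              if_pos (mem_range.mpr hv), add_assoc]
    constructor
    · intro s hs1 hs2
      have hx : (primRoot v ^ s) ^ v = 1 := primRoot_pow_pow_v v hv s
      have hne : primRoot v ^ s ≠ 1 := hprim.pow_ne_one_of_pos_of_lt (Nat.one_le_iff_ne_zero.mp hs1) hs2
      have h := key s hs2
      rw [sum_pow_eq v _ hx, if_neg hne, mul_zero, zero_add] at h
      have : (v : ℂ) * (∑ i, PAFc v (A i) s) = (v : ℂ) * α := by rw [h]; ring
      exact mul_left_cancel₀ hvne this
    · have h := key 0 hv
      have h0 : primRoot v ^ 0 = 1 := pow_zero _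
      rw [h0, sum_pow_eq v 1 (one_pow v), if_pos rfl] at h
      have : (v : ℂ) * (∑ i, PAFc v (A i) 0) = (v : ℂ) * α₀ := by rw [h]; ring
      exact mul_left_cancel₀ hvne this
end

section
/- For any sequence A of length v and divisor m of v with d = v/m, the m-compression A^{(m)} of length d satisfies PAF(A^{(m)}, s) = Σ_{j=0}^{m-1} PAF(A, s + jd) for 0 ≤ s < d. -/
open Finset

/-- Periodic autocorrelation function of an integer sequence of length `v`. -/
def PAF (v : ℕ) (A : ℕ → ℤ) (s : ℕ) : ℤ :=
  ∑ k ∈ range v, A k * A ((k + s) % v)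

/-- The `m`-compression of a sequence of length `v`: a sequence of length `d = v / m`
whose `i`-th entry is `∑_{j<m} a_{i + jd}`. -/
def compress (v m : ℕ) (A : ℕ → ℤ) : ℕ → ℤ :=
  fun i => ∑ j ∈ range m, A (i + j * (v / m))

private lemma sum_rotate (m : ℕ) (g : ℕ → ℤ) :
    ∑ j ∈ range m, g ((1 + j) % m) = ∑ j ∈ range m, g (j % m) := by
  cases m with
  | zero => simp
  | succ m' =>
    rw [Finset.sum_range_succ, Finset.sum_range_succ']
    congr 1
    · apply Finset.sum_congr rfl
      intro j hj
      rw [mem_range] at hj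
      rw [Nat.mod_eq_of_lt (by omega : 1 + j < m' + 1),
        Nat.mod_eq_of_lt (by omega : j + 1 < m' + 1), Nat.add_comm 1 j]
    · simp [Nat.add_comm 1 m', Nat.mod_self]

private lemma sum_shift_s9 (m : ℕ) (f : ℕ → ℤ) :
    ∀ c, ∑ j ∈ range m, f ((c + j) % m) = ∑ j ∈ range m, f (j % m) := by
  intro c
  induction c with
  | zero => simp
  | succ c ih =>
    have step := sum_rotate m (fun x => f ((c + x) % m))
    simp only [Nat.add_mod_mod] at step
    calc ∑ j ∈ range m, f ((c + 1 + j) % m)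
        = ∑ j ∈ range m, f ((c + (1 + j)) % m) := by
          apply Finset.sum_congr rfl; intro j _
          rw [Nat.add_assoc]
      _ = ∑ j ∈ range m, f ((c + j) % m) := step
      _ = _ := ih

private lemma sum_blocks (d m : ℕ) (F : ℕ → ℤ) :
    ∑ k ∈ range (d * m), F k = ∑ l ∈ range m, ∑ i ∈ range d, F (i + l * d) := by
  induction m with
  | zero => simp
  | succ m ih =>
    rw [Nat.mul_succ, Finset.sum_range_add, ih, Finset.sum_range_succ]
    congr 1
    apply Finset.sum_congr rfl
    intro i _
    congr 1
    ring

private lemma pafInnerSum (d m : ℕ) (hd : 0 < d) (A : ℕ → ℤ) (t : ℕ) :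
    ∑ j ∈ range m, A ((t + j * d) % (d * m)) = ∑ j ∈ range m, A (t % d + j * d) := by
  have h : ∀ j, (t + j * d) % (d * m) = t % d + d * ((t / d + j) % m) := by
    intro j
    rw [Nat.mod_mul, Nat.add_mul_mod_self_right, Nat.add_mul_div_right _ _ hd]
  simp only [h]
  have hs := sum_shift_s9 m (fun x => A (t % d + d * x)) (t / d)
  rw [hs]
  apply Finset.sum_congr rfl
  intro j hj
  rw [Nat.mod_eq_of_lt (mem_range.mp hj), mul_comm]

set_option maxHeartbeats 1000000 in
/-- Compression preserves complementarity: for any sequence `A` of length `v` and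
divisor `m` of `v` with `d = v/m`, `PAF(A^{(m)}, s) = ∑_{j<m} PAF(A, s + jd)`
for `0 ≤ s < d`. -/
theorem paf_compress (v m d : ℕ) (hm : 0 < m) (hmv : m ∣ v) (hd : d = v / m)
    (A : ℕ → ℤ) :
    ∀ s < d, PAF d (compress v m A) s = ∑ j ∈ range m, PAF v A (s + j * d) := by
  intro s hs
  have hd0 : 0 < d := by omega
  have hv : v = d * m := by rw [hd, Nat.div_mul_cancel hmv]
  have hC : compress v m A = fun i => ∑ j ∈ range m, A (i + j * d) := by
    funext i; unfold compress; rw [← hd]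
  calc PAF d (compress v m A) s
      = ∑ k ∈ range d, (∑ l ∈ range m, A (k + l * d)) *
          (∑ j ∈ range m, A ((k + s) % d + j * d)) := by
        unfold PAF; simp only [hC]
    _ = ∑ k ∈ range d, ∑ l ∈ range m,
          A (k + l * d) * ∑ j ∈ range m, A ((k + s) % d + j * d) := by
        apply Finset.sum_congr rfl; intro k _; rw [Finset.sum_mul]
    _ = ∑ l ∈ range m, ∑ k ∈ range d,
          A (k + l * d) * ∑ j ∈ range m, A ((k + s) % d + j * d) :=
        Finset.sum_comm
    _ = ∑ l ∈ range m, ∑ k ∈ range d,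
          A (k + l * d) * ∑ j ∈ range m, A ((k + l * d + s) % d + j * d) := by
        apply Finset.sum_congr rfl; intro l _
        apply Finset.sum_congr rfl; intro k _
        have : (k + l * d + s) % d = (k + s) % d := by
          rw [show k + l * d + s = k + s + l * d from by ring,
            Nat.add_mul_mod_self_right]
        rw [this]
    _ = ∑ k ∈ range (d * m), A k * ∑ j ∈ range m, A ((k + s) % d + j * d) :=
        (sum_blocks d m (fun k => A k * ∑ j ∈ range m, A ((k + s) % d + j * d))).symm
    _ = ∑ k ∈ range v, A k * ∑ j ∈ range m, A ((k + s + j * d) % v) := by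
        rw [hv]
        apply Finset.sum_congr rfl; intro k _
        rw [pafInnerSum d m hd0 A (k + s)]
    _ = ∑ j ∈ range m, PAF v A (s + j * d) := by
        unfold PAF
        rw [Finset.sum_comm]
        apply Finset.sum_congr rfl; intro k _
        rw [Finset.mul_sum]
        apply Finset.sum_congr rfl; intro j _
        rw [show k + (s + j * d) = k + s + j * d from by ring]
end
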